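/- Let Σ be a symmetric positive definite 3×3 real matrix, μ ∈ ℝ³, o ∈ ℝ³ and r > 0, and suppose ‖μ − o‖ > r (the Gaussian mean lies outside the closed ball B = {x : ‖x − o‖ ≤ r}). If x_max ∈ B is a point at which the Gaussian density p(·; μ, Σ) attains its maximum over B, then ‖x_max − o‖ = r, and there exists λ ≥ 0 such that x_max = (Σ⁻¹ + λI)⁻¹(Σ⁻¹μ + λo). In particular, x_max lies on the one-parameter curve x(λ) = (Σ⁻¹ + λI)⁻¹(Σ⁻¹μ + λo), so it can be found by a one-dimensional search over λ. -/

import Mathlib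

open Matrix Real

/-- The Gaussian probability density with mean `μ` and covariance `S` on `ℝⁿ`. -/
noncomputable def gaussianDensity {n : ℕ} (S : Matrix (Fin n) (Fin n) ℝ)
    (μ : EuclideanSpace ℝ (Fin n)) (x : EuclideanSpace ℝ (Fin n)) : ℝ :=
  Real.exp (-(1/2) * ((x - μ) ⬝ᵥ (S⁻¹ *ᵥ (x - μ)))) / Real.sqrt ((2 * π) ^ n * S.det)

/-- Matrix–vector multiplication, viewed as a map on Euclidean space. -/
noncomputable def mulVecE {n : ℕ} (M : Matrix (Fin n) (Fin n) ℝ)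
    (x : EuclideanSpace ℝ (Fin n)) : EuclideanSpace ℝ (Fin n) :=
  (EuclideanSpace.equiv (Fin n) ℝ).symm (M *ᵥ x)

/-!
Maximizing the density over the ball `B` is minimizing the Mahalanobis form
`q(x) = ⟪Σ⁻¹ (x - μ), x - μ⟫` over `B`. Since `B` is convex, the first-order condition says that
`x_max` also minimizes the linear functional `⟪g, ·⟫` on `B`, where `g = Σ⁻¹ (x_max - μ)` is half
the gradient; `g ≠ 0` because `μ ∉ B`. Comparing with the point `o - (r / ‖g‖) g` and using
Cauchy–Schwarz forces `‖x_max - o‖ = r` and `g = λ (o - x_max)` with `λ = ‖g‖ / r`, which is the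
Lagrange condition `(Σ⁻¹ + λ I) x_max = Σ⁻¹ μ + λ o`.
-/

open Metric
open scoped RealInnerProductSpace

theorem IsMinOn.isMinOn_of_hasFDerivAt {E : Type*} [NormedAddCommGroup E] [NormedSpace ℝ E]
    {f : E → ℝ} {f' : E →L[ℝ] ℝ} {s : Set E} {x : E} (hs : Convex ℝ s) (hx : x ∈ s)
    (hmin : IsMinOn f s x) (hf : HasFDerivAt f f' x) : IsMinOn f' s x := by
  refine isMinOn_iff.2 fun y hy => ?_
  have := hmin.localize.hasFDerivWithinAt_nonneg hf.hasFDerivWithinAt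
    (sub_mem_posTangentConeAt_of_segment_subset (hs.segment_subset hx hy))
  simpa [map_sub, sub_nonneg] using this

section InnerProductSpace

variable {F : Type*} [NormedAddCommGroup F] [InnerProductSpace ℝ F]

theorem LinearMap.IsSymmetric.hasFDerivAt_inner_sub_self {T : F →L[ℝ] F}
    (hT : (T : F →ₗ[ℝ] F).IsSymmetric) (μ x : F) :
    HasFDerivAt (fun y => ⟪T (y - μ), y - μ⟫) (2 • innerSL ℝ (T (x - μ))) x := by
  have := (hT.hasStrictFDerivAt_reApplyInnerSelf (x - μ)).hasFDerivAt.comp x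
    ((hasFDerivAt_id x).sub_const μ)
  simpa [Function.comp_def, ContinuousLinearMap.reApplyInnerSelf_apply] using this

theorem IsMinOn.isMinOn_inner_of_quadratic {T : F →L[ℝ] F} (hT : (T : F →ₗ[ℝ] F).IsSymmetric)
    {s : Set F} {μ x : F} (hs : Convex ℝ s) (hx : x ∈ s)
    (hmin : IsMinOn (fun y => ⟪T (y - μ), y - μ⟫) s x) :
    IsMinOn (fun y => ⟪T (x - μ), y⟫) s x := by
  refine isMinOn_iff.2 fun y hy => ?_
  have hderiv := hmin.isMinOn_of_hasFDerivAt hs hx (hT.hasFDerivAt_inner_sub_self μ x)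
  have := isMinOn_iff.1 hderiv y hy
  simp only [_root_.smul_apply, innerSL_apply_apply, nsmul_eq_mul, Nat.cast_ofNat] at this
  linarith

theorem IsMinOn.norm_sub_eq_and_smul_eq_of_inner_closedBall {g o x : F} {r : ℝ} (hg : g ≠ 0)
    (hx : x ∈ closedBall o r) (hmin : IsMinOn (fun y => ⟪g, y⟫) (closedBall o r) x) :
    ‖x - o‖ = r ∧ r • g = ‖g‖ • (o - x) := by
  have hg' : 0 < ‖g‖ := norm_pos_iff.2 hg
  rw [mem_closedBall, dist_eq_norm] at hx
  have hr : 0 ≤ r := (norm_nonneg _).trans hx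
  have hy : o - (r / ‖g‖) • g ∈ closedBall o r := by
    rw [mem_closedBall, dist_eq_norm, sub_sub_cancel_left, norm_neg, norm_smul,
      Real.norm_of_nonneg (by positivity), div_mul_cancel₀ _ hg'.ne']
  have hlower : r * ‖g‖ ≤ ⟪g, o - x⟫ := by
    have := isMinOn_iff.1 hmin _ hy
    simp only [inner_sub_right, real_inner_smul_right, real_inner_self_eq_norm_sq] at this ⊢
    field_simp at this
    linarith
  have hupper : ⟪g, o - x⟫ ≤ ‖g‖ * ‖o - x‖ := real_inner_le_norm _ _
  rw [norm_sub_rev] at hx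
  have hnorm : ‖o - x‖ = r := by nlinarith
  refine ⟨by rwa [norm_sub_rev], ?_⟩
  rw [← hnorm]
  exact inner_eq_norm_mul_iff_real.1 (by nlinarith)

end InnerProductSpace

section Gaussian

variable {n : ℕ}

theorem Matrix.PosDef.isMinOn_inner_of_isMaxOn_gaussianDensity {S : Matrix (Fin n) (Fin n) ℝ}
    (hS : S.PosDef) {μ x : EuclideanSpace ℝ (Fin n)} {s : Set (EuclideanSpace ℝ (Fin n))}
    (hmax : IsMaxOn (gaussianDensity S μ) s x) :
    IsMinOn (fun y => ⟪toEuclideanCLM (𝕜 := ℝ) S⁻¹ (y - μ), y - μ⟫) s x := by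
  have hc : 0 < √((2 * π) ^ n * S.det) := Real.sqrt_pos.2 (by have := hS.det_pos; positivity)
  refine isMinOn_iff.2 fun y hy => ?_
  have := isMaxOn_iff.1 hmax y hy
  rw [gaussianDensity, gaussianDensity, div_le_div_iff_of_pos_right hc, Real.exp_le_exp] at this
  change (x - μ) ⬝ᵥ (S⁻¹ *ᵥ (x - μ)) ≤ (y - μ) ⬝ᵥ (S⁻¹ *ᵥ (y - μ))
  linarith

theorem eq_mulVecE_inv_of_mulVecE_sub_eq {A : Matrix (Fin n) (Fin n) ℝ} {l : ℝ}
    (hA : IsUnit (A + l • 1)) {x μ o : EuclideanSpace ℝ (Fin n)}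
    (h : mulVecE A (x - μ) = l • (o - x)) :
    x = mulVecE (A + l • 1)⁻¹ (mulVecE A μ + l • o) := by
  have := hA.invertible
  refine WithLp.ofLp_injective 2 (inv_mulVec_eq_vec ?_).symm
  have h' := congrArg WithLp.ofLp h
  simp only [mulVecE, WithLp.ofLp_sub, mulVec_sub, PiLp.continuousLinearEquiv_symm_apply,
    WithLp.toLp_sub, WithLp.ofLp_smul, WithLp.ofLp_add, add_mulVec] at h' ⊢
  rw [smul_mulVec, one_mulVec]
  linear_combination (norm := module) -h'

end Gaussian

/-- **Lemma 1 of the paper.** If the Gaussian mean `μ` lies outside the closed ball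
`B = {x : ‖x − o‖ ≤ r}`, then any maximizer `x_max` of the Gaussian density over `B` lies on
the boundary sphere `‖x_max − o‖ = r`, and there exists a Lagrange multiplier `λ ≥ 0` with
`x_max = (Σ⁻¹ + λI)⁻¹ (Σ⁻¹ μ + λ o)`, so `x_max` lies on the one-parameter search curve
`x(λ)`. -/
theorem max_prob_point_on_search_curve
    (S : Matrix (Fin 3) (Fin 3) ℝ) (hS : S.PosDef)
    (μ o : EuclideanSpace ℝ (Fin 3)) (r : ℝ) (hr : 0 < r)
    (hout : ‖μ - o‖ > r)
    (B : Set (EuclideanSpace ℝ (Fin 3))) (hB : B = Metric.closedBall o r)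
    (xmax : EuclideanSpace ℝ (Fin 3)) (hmem : xmax ∈ B)
    (hmax : IsMaxOn (gaussianDensity S μ) B xmax) :
    ‖xmax - o‖ = r ∧
      ∃ l : ℝ, 0 ≤ l ∧
        xmax = mulVecE (S⁻¹ + l • (1 : Matrix (Fin 3) (Fin 3) ℝ))⁻¹ (mulVecE S⁻¹ μ + l • o) := by
  subst hB
  set T := toEuclideanCLM (𝕜 := ℝ) S⁻¹
  have hT : (T : EuclideanSpace ℝ (Fin 3) →ₗ[ℝ] EuclideanSpace ℝ (Fin 3)).IsSymmetric :=
    isSymmetric_toEuclideanLin_iff.2 hS.inv.isHermitian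
  have hlin := (hS.isMinOn_inner_of_isMaxOn_gaussianDensity hmax).isMinOn_inner_of_quadratic hT
    (convex_closedBall o r) hmem
  have hne : xmax - μ ≠ 0 := by
    rw [sub_ne_zero]
    rintro rfl
    rw [mem_closedBall, dist_eq_norm] at hmem
    linarith
  have hg : T (xmax - μ) ≠ 0 := fun h => hne <| WithLp.ofLp_injective 2 <|
    mulVec_injective_iff_isUnit.2 hS.inv.isUnit <|
      (congrArg WithLp.ofLp h).trans (mulVec_zero _).symm
  obtain ⟨hnorm, hsmul⟩ := hlin.norm_sub_eq_and_smul_eq_of_inner_closedBall hg hmem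
  refine ⟨hnorm, ‖T (xmax - μ)‖ / r, by positivity, eq_mulVecE_inv_of_mulVecE_sub_eq ?_ ?_⟩
  · exact (hS.inv.add_posSemidef (PosSemidef.one.smul (by positivity))).isUnit
  · change T (xmax - μ) = _
    rw [div_eq_inv_mul, mul_smul, ← hsmul, inv_smul_smul₀ hr.ne']
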